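/- arXiv:1710.06878 — 9 statements merged into one kernel-verified Lean document; each statement's English description precedes it below -/
import Mathlib

section
/- Let Y and Z be topological spaces and let K be a Z-compact subset of Y. Then the family H_K = { U ∈ O(Y) : K ⊆ U } belongs to τ_1^Z, i.e. H_K satisfies conditions (α) and (β). -/
open Set TopologicalSpace

/-- The family O_Z(Y) of preimages of open sets under continuous maps. -/
def OZ (Y Z : Type*) [TopologicalSpace Y] [TopologicalSpace Z] : Set (Set Y) :=
  {s | ∃ (f : ContinuousMap Y Z) (U : Set Z), IsOpen U ∧ s = f ⁻¹' U}

/-- The Z-topology τ_Y^Z on Y, generated by the subbasis O_Z(Y). -/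
def zTop (Y Z : Type*) [TopologicalSpace Y] [TopologicalSpace Z] : TopologicalSpace Y :=
  TopologicalSpace.generateFrom (OZ Y Z)

/-- K is Z-compact if K is compact in (Y, τ_Y^Z). -/
def IsZCompact (Y Z : Type*) [TopologicalSpace Y] [TopologicalSpace Z] (K : Set Y) : Prop :=
  @IsCompact Y (zTop Y Z) K

/-- The Z-compact open topology on C(Y,Z). -/
def tcoZ (Y Z : Type*) [TopologicalSpace Y] [TopologicalSpace Z] :
    TopologicalSpace (ContinuousMap Y Z) :=
  TopologicalSpace.generateFrom
    {S | ∃ (K : Set Y) (U : Set Z), IsZCompact Y Z K ∧ IsOpen U ∧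
      S = {f : ContinuousMap Y Z | f '' K ⊆ U}}

/-- The compact open topology on C(Y,Z). -/
def tco (Y Z : Type*) [TopologicalSpace Y] [TopologicalSpace Z] :
    TopologicalSpace (ContinuousMap Y Z) :=
  TopologicalSpace.generateFrom
    {S | ∃ (K : Set Y) (U : Set Z), IsCompact K ∧ IsOpen U ∧
      S = {f : ContinuousMap Y Z | f '' K ⊆ U}}

/-- Membership in the Z-Scott family τ_1^Z on O(Y). -/
def Tau1 (Y Z : Type*) [TopologicalSpace Y] [TopologicalSpace Z] (H : Set (Set Y)) : Prop :=
  (∀ s ∈ H, IsOpen s) ∧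
  (∀ s ∈ H, s ∈ OZ Y Z → ∀ V : Set Y, IsOpen V → s ⊆ V → V ∈ H) ∧
  (∀ C ⊆ OZ Y Z, ⋃₀ C ∈ H → ∃ F ⊆ C, F.Finite ∧ ⋃₀ F ∈ H)

/-- Membership in the strong Z-Scott family τ_{1,s}^Z on O(Y). -/
def Tau1s (Y Z : Type*) [TopologicalSpace Y] [TopologicalSpace Z] (H : Set (Set Y)) : Prop :=
  (∀ s ∈ H, IsOpen s) ∧
  (∀ s ∈ H, s ∈ OZ Y Z → ∀ V : Set Y, IsOpen V → s ⊆ V → V ∈ H) ∧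
  (∀ C ⊆ OZ Y Z, ⋃₀ C = Set.univ → ∃ F ⊆ C, F.Finite ∧ ⋃₀ F ∈ H)

/-- Scott open families of open sets of Y. -/
def ScottOpen (Y : Type*) [TopologicalSpace Y] (H : Set (Set Y)) : Prop :=
  (∀ s ∈ H, IsOpen s) ∧
  (∀ s ∈ H, ∀ V : Set Y, IsOpen V → s ⊆ V → V ∈ H) ∧
  (∀ C : Set (Set Y), (∀ c ∈ C, IsOpen c) → ⋃₀ C ∈ H → ∃ F ⊆ C, F.Finite ∧ ⋃₀ F ∈ H)

/-- Strong Scott open families of open sets of Y. -/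
def StrongScottOpen (Y : Type*) [TopologicalSpace Y] (H : Set (Set Y)) : Prop :=
  (∀ s ∈ H, IsOpen s) ∧
  (∀ s ∈ H, ∀ V : Set Y, IsOpen V → s ⊆ V → V ∈ H) ∧
  (∀ C : Set (Set Y), (∀ c ∈ C, IsOpen c) → ⋃₀ C = Set.univ →
    ∃ F ⊆ C, F.Finite ∧ ⋃₀ F ∈ H)

/-- The topology t_1^Z on C(Y,Z). -/
def t1Z (Y Z : Type*) [TopologicalSpace Y] [TopologicalSpace Z] :
    TopologicalSpace (ContinuousMap Y Z) :=
  TopologicalSpace.generateFrom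
    {S | ∃ (H : Set (Set Y)) (U : Set Z), Tau1 Y Z H ∧ IsOpen U ∧
      S = {f : ContinuousMap Y Z | f ⁻¹' U ∈ H}}

/-- The topology t_{1,s}^Z on C(Y,Z). -/
def t1sZ (Y Z : Type*) [TopologicalSpace Y] [TopologicalSpace Z] :
    TopologicalSpace (ContinuousMap Y Z) :=
  TopologicalSpace.generateFrom
    {S | ∃ (H : Set (Set Y)) (U : Set Z), Tau1s Y Z H ∧ IsOpen U ∧
      S = {f : ContinuousMap Y Z | f ⁻¹' U ∈ H}}

/-- The Isbell topology on C(Y,Z). -/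
def tIs (Y Z : Type*) [TopologicalSpace Y] [TopologicalSpace Z] :
    TopologicalSpace (ContinuousMap Y Z) :=
  TopologicalSpace.generateFrom
    {S | ∃ (H : Set (Set Y)) (U : Set Z), ScottOpen Y H ∧ IsOpen U ∧
      S = {f : ContinuousMap Y Z | f ⁻¹' U ∈ H}}

/-- The strong Isbell topology on C(Y,Z). -/
def tsIs (Y Z : Type*) [TopologicalSpace Y] [TopologicalSpace Z] :
    TopologicalSpace (ContinuousMap Y Z) :=
  TopologicalSpace.generateFrom
    {S | ∃ (H : Set (Set Y)) (U : Set Z), StrongScottOpen Y H ∧ IsOpen U ∧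
      S = {f : ContinuousMap Y Z | f ⁻¹' U ∈ H}}

/-- A topology t on C(Y,Z) is admissible if the evaluation map is continuous. -/
def Admissible (Y Z : Type*) [TopologicalSpace Y] [TopologicalSpace Z]
    (t : TopologicalSpace (ContinuousMap Y Z)) : Prop :=
  @Continuous (ContinuousMap Y Z × Y) Z (@instTopologicalSpaceProd _ _ t _) _
    fun p => p.1 p.2

/-- B is bounded in (X, t): every t-open cover of X has a finite subfamily covering B. -/
def BoundedIn {X : Type*} (t : TopologicalSpace X) (B : Set X) : Prop :=
  ∀ C : Set (Set X), (∀ c ∈ C, @IsOpen X t c) → ⋃₀ C = Set.univ →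
    ∃ F ⊆ C, F.Finite ∧ B ⊆ ⋃₀ F


/-- Y is corecompact: each point has, inside each open neighborhood U, a smaller open
neighborhood that is bounded in the subspace U of Y. -/
def Corecompact (Y : Type*) [inst : TopologicalSpace Y] : Prop :=
  ∀ y : Y, ∀ U : Set Y, IsOpen U → y ∈ U →
    ∃ V : Set Y, IsOpen V ∧ y ∈ V ∧ V ⊆ U ∧
      BoundedIn (TopologicalSpace.induced (Subtype.val : U → Y) inst)
        ((Subtype.val : U → Y) ⁻¹' V)

/-- Y is locally bounded. -/
def LocallyBounded (Y : Type*) [inst : TopologicalSpace Y] : Prop :=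
  ∀ y : Y, ∀ U : Set Y, IsOpen U → y ∈ U →
    ∃ V : Set Y, IsOpen V ∧ y ∈ V ∧ V ⊆ U ∧ BoundedIn inst V

/-- Y is locally Z-bounded. -/
def LocallyZBounded (Y Z : Type*) [TopologicalSpace Y] [TopologicalSpace Z] : Prop :=
  ∀ y : Y, ∀ U : Set Y, IsOpen U → y ∈ U →
    ∃ s ∈ OZ Y Z, y ∈ s ∧ s ⊆ U ∧ BoundedIn (zTop Y Z) s

/-- A << U : A is bounded in the set U endowed with the subspace topology
inherited from (Y, τ_Y^Z). -/
def ZWayBelow (Y Z : Type*) [TopologicalSpace Y] [TopologicalSpace Z] (A U : Set Y) : Prop :=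
  BoundedIn (TopologicalSpace.induced (Subtype.val : U → Y) (zTop Y Z))
    ((Subtype.val : U → Y) ⁻¹' A)

/-- Y is Z-corecompact. -/
def ZCorecompact (Y Z : Type*) [TopologicalSpace Y] [TopologicalSpace Z] : Prop :=
  ∀ y : Y, ∀ U : Set Y, IsOpen U → y ∈ U →
    ∃ s ∈ OZ Y Z, y ∈ s ∧ s ⊆ U ∧ ZWayBelow Y Z s U

/-- The topology on O(Y) generated by the sets <K> = { U open : K ⊆ U }, K compact. -/
def kTop (Y : Type*) [TopologicalSpace Y] : TopologicalSpace (TopologicalSpace.Opens Y) :=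
  TopologicalSpace.generateFrom
    {S | ∃ K : Set Y, IsCompact K ∧ S = {U : TopologicalSpace.Opens Y | K ⊆ (U : Set Y)}}

theorem stmt7 (Y Z : Type*) [TopologicalSpace Y] [TopologicalSpace Z]
    (K : Set Y) (hK : IsZCompact Y Z K) :
    Tau1 Y Z {U : Set Y | IsOpen U ∧ K ⊆ U} := by
  refine ⟨fun s hs => hs.1, fun s hs _ V hV hsV => ⟨hV, hs.2.trans hsV⟩, ?_⟩
  intro C hC hU
  have hopen : ∀ c ∈ C, @IsOpen Y (zTop Y Z) c := fun c hc =>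
    TopologicalSpace.isOpen_generateFrom_of_mem (hC hc)
  obtain ⟨F, hFC, hFfin, hKF⟩ := @IsCompact.elim_finite_subcover_image Y (Set Y) (zTop Y Z)
    K C id hK hopen (by simpa [Set.sUnion_eq_biUnion] using hU.2)
  refine ⟨F, hFC, hFfin, ?_, by simpa [Set.sUnion_eq_biUnion] using hKF⟩
  exact isOpen_sUnion (fun t ht => by
    obtain ⟨f, U, hUo, rfl⟩ := hC (hFC ht); exact hUo.preimage f.continuous)
end

section
/- Let Y and Z be topological spaces. On C(Y,Z) the following inclusions of topologies hold: t_co ⊆ t_co^Z, t_co^Z ⊆ t_1^Z, t_co^Z ⊆ t_{1,s}^Z, t_Is ⊆ t_1^Z, and t_sIs ⊆ t_{1,s}^Z. -/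
open Set TopologicalSpace

lemma sUnion_finite_subcover_aux {X : Type*} [TopologicalSpace X] {K : Set X}
    (hK : IsCompact K) {C : Set (Set X)} (hC : ∀ c ∈ C, IsOpen c) (hcov : K ⊆ ⋃₀ C) :
    ∃ F ⊆ C, F.Finite ∧ K ⊆ ⋃₀ F := by
  obtain ⟨F, hFC, hFfin, hKF⟩ :=
    hK.elim_finite_subcover_image (b := C) (c := id) hC (by simpa [Set.sUnion_eq_biUnion] using hcov)
  exact ⟨F, hFC, hFfin, by simpa [Set.sUnion_eq_biUnion] using hKF⟩

theorem stmt8 (Y Z : Type*) [TopologicalSpace Y] [TopologicalSpace Z] :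
    (∀ S : Set (ContinuousMap Y Z), @IsOpen _ (tco Y Z) S → @IsOpen _ (tcoZ Y Z) S) ∧
    (∀ S : Set (ContinuousMap Y Z), @IsOpen _ (tcoZ Y Z) S → @IsOpen _ (t1Z Y Z) S) ∧
    (∀ S : Set (ContinuousMap Y Z), @IsOpen _ (tcoZ Y Z) S → @IsOpen _ (t1sZ Y Z) S) ∧
    (∀ S : Set (ContinuousMap Y Z), @IsOpen _ (tIs Y Z) S → @IsOpen _ (t1Z Y Z) S) ∧
    (∀ S : Set (ContinuousMap Y Z), @IsOpen _ (tsIs Y Z) S → @IsOpen _ (t1sZ Y Z) S) := by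
  -- Basic facts
  have hOZopen : ∀ s ∈ OZ Y Z, IsOpen s := by
    rintro s ⟨f, U, hU, rfl⟩
    exact hU.preimage f.continuous
  have hOZz : ∀ s ∈ OZ Y Z, @IsOpen Y (zTop Y Z) s := fun s hs =>
    TopologicalSpace.GenerateOpen.basic s hs
  -- finite subcover for Z-compact sets from covers by members of OZ
  have hsub : ∀ K : Set Y, IsZCompact Y Z K → ∀ C ⊆ OZ Y Z, K ⊆ ⋃₀ C →
      ∃ F ⊆ C, F.Finite ∧ K ⊆ ⋃₀ F := by
    intro K hK C hC hcov
    exact @sUnion_finite_subcover_aux Y (zTop Y Z) K hK C (fun c hc => hOZz c (hC hc)) hcov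
  -- For a Z-compact K, the family H(K) and its properties
  have hH1 : ∀ K : Set Y, IsZCompact Y Z K → Tau1 Y Z {V | IsOpen V ∧ K ⊆ V} := by
    intro K hK
    refine ⟨fun s hs => hs.1, fun s hs _ V hV hsV => ⟨hV, hs.2.trans hsV⟩, ?_⟩
    intro C hC hmem
    obtain ⟨F, hFC, hFfin, hKF⟩ := hsub K hK C hC hmem.2
    exact ⟨F, hFC, hFfin, isOpen_sUnion (fun t ht => hOZopen t (hC (hFC ht))), hKF⟩
  have hH1s : ∀ K : Set Y, IsZCompact Y Z K → Tau1s Y Z {V | IsOpen V ∧ K ⊆ V} := by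
    intro K hK
    refine ⟨fun s hs => hs.1, fun s hs _ V hV hsV => ⟨hV, hs.2.trans hsV⟩, ?_⟩
    intro C hC huniv
    obtain ⟨F, hFC, hFfin, hKF⟩ := hsub K hK C hC (by rw [huniv]; exact Set.subset_univ K)
    exact ⟨F, hFC, hFfin, isOpen_sUnion (fun t ht => hOZopen t (hC (hFC ht))), hKF⟩
  have hset : ∀ (K : Set Y) (U : Set Z), IsOpen U →
      {f : ContinuousMap Y Z | f '' K ⊆ U} =
        {f : ContinuousMap Y Z | f ⁻¹' U ∈ {V | IsOpen V ∧ K ⊆ V}} := by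
    intro K U hU
    ext f
    simp only [Set.mem_setOf_eq, Set.image_subset_iff]
    exact ⟨fun h => ⟨hU.preimage f.continuous, h⟩, fun h => h.2⟩
  refine ⟨?_, ?_, ?_, ?_, ?_⟩
  · -- tcoZ ≤ tco
    intro S hS
    refine (le_generateFrom (t := tcoZ Y Z) ?_) S hS
    rintro T ⟨K, U, hK, hU, rfl⟩
    have hKz : IsZCompact Y Z K := by
      have hid : @Continuous Y Y _ (zTop Y Z) id := by
        rw [@continuous_id_iff_le Y _ (zTop Y Z)]
        exact le_generateFrom hOZopen
      have := @IsCompact.image Y Y _ (zTop Y Z) K id hK hid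
      rwa [Set.image_id] at this
    exact TopologicalSpace.GenerateOpen.basic _ ⟨K, U, hKz, hU, rfl⟩
  · -- t1Z ≤ tcoZ
    intro S hS
    refine (le_generateFrom (t := t1Z Y Z) ?_) S hS
    rintro T ⟨K, U, hK, hU, rfl⟩
    rw [hset K U hU]
    exact TopologicalSpace.GenerateOpen.basic _ ⟨_, U, hH1 K hK, hU, rfl⟩
  · -- t1sZ ≤ tcoZ
    intro S hS
    refine (le_generateFrom (t := t1sZ Y Z) ?_) S hS
    rintro T ⟨K, U, hK, hU, rfl⟩
    rw [hset K U hU]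
    exact TopologicalSpace.GenerateOpen.basic _ ⟨_, U, hH1s K hK, hU, rfl⟩
  · -- t1Z ≤ tIs
    intro S hS
    refine (le_generateFrom (t := t1Z Y Z) ?_) S hS
    rintro T ⟨H, U, ⟨h1, h2, h3⟩, hU, rfl⟩
    refine TopologicalSpace.GenerateOpen.basic _ ⟨H, U, ⟨h1, fun s hs _ => h2 s hs, ?_⟩, hU, rfl⟩
    exact fun C hC hmem => h3 C (fun c hc => hOZopen c (hC hc)) hmem
  · -- t1sZ ≤ tsIs
    intro S hS
    refine (le_generateFrom (t := t1sZ Y Z) ?_) S hS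
    rintro T ⟨H, U, ⟨h1, h2, h3⟩, hU, rfl⟩
    refine TopologicalSpace.GenerateOpen.basic _ ⟨H, U, ⟨h1, fun s hs _ => h2 s hs, ?_⟩, hU, rfl⟩
    exact fun C hC hmem => h3 C (fun c hc => hOZopen c (hC hc)) hmem
end

section
/- Let Y and Z be topological spaces and suppose Z is a T0 space. Then C(Y,Z) equipped with any of the topologies t_co^Z, t_1^Z, or t_{1,s}^Z is a T0 space. -/
open Set TopologicalSpace

/-!
Each of the three topologies contains, for every point `y` and open `U ⊆ Z`, the set
`{f | f y ∈ U}`: for `t_co^Z` take the Z-compact set `{y}`, for `t_1^Z` and `t_{1,s}^Z` take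
the family of open neighbourhoods of `y`. Hence the map `C(Y,Z) → (Y → Z)` into the product
space is continuous, and being injective it pulls back the `T0` property of `Y → Z`.
-/

open scoped Topology

section

variable {Y Z : Type*} [TopologicalSpace Y] [TopologicalSpace Z]

theorem t0Space_of_isOpen_setOf_apply_mem [T0Space Z] (t : TopologicalSpace C(Y, Z))
    (h : ∀ (y : Y) (U : Set Z), IsOpen U → IsOpen[t] {f : C(Y, Z) | f y ∈ U}) :
    @T0Space C(Y, Z) t :=
  letI := t
  t0Space_of_injective_of_continuous DFunLike.coe_injective
    (continuous_pi fun y => continuous_def.2 fun U hU => h y U hU)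

theorem isOpen_of_mem_OZ {s : Set Y} (hs : s ∈ OZ Y Z) : IsOpen s := by
  obtain ⟨f, U, hU, rfl⟩ := hs
  exact hU.preimage f.continuous

def openNhdsFamily (y : Y) : Set (Set Y) :=
  {V | IsOpen V ∧ y ∈ V}

theorem exists_finite_subfamily_mem_openNhdsFamily {y : Y} {C : Set (Set Y)}
    (hC : C ⊆ OZ Y Z) (hy : y ∈ ⋃₀ C) :
    ∃ F ⊆ C, F.Finite ∧ ⋃₀ F ∈ openNhdsFamily y := by
  obtain ⟨c, hc, hyc⟩ := hy
  exact ⟨{c}, singleton_subset_iff.2 hc, finite_singleton c,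
    by simpa only [sUnion_singleton] using ⟨isOpen_of_mem_OZ (hC hc), hyc⟩⟩

theorem tau1_openNhdsFamily (y : Y) : Tau1 Y Z (openNhdsFamily y) :=
  ⟨fun _ hs => hs.1, fun _ hs _ _ hV hsV => ⟨hV, hsV hs.2⟩,
    fun _ hC hy => exists_finite_subfamily_mem_openNhdsFamily hC hy.2⟩

theorem tau1s_openNhdsFamily (y : Y) : Tau1s Y Z (openNhdsFamily y) :=
  ⟨fun _ hs => hs.1, fun _ hs _ _ hV hsV => ⟨hV, hsV hs.2⟩,
    fun _ hC hcover => exists_finite_subfamily_mem_openNhdsFamily hC (hcover ▸ mem_univ y)⟩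

theorem setOf_preimage_mem_openNhdsFamily {y : Y} {U : Set Z} (hU : IsOpen U) :
    {f : C(Y, Z) | f ⁻¹' U ∈ openNhdsFamily y} = {f | f y ∈ U} :=
  ext fun f => ⟨fun hf => hf.2, fun hf => ⟨hU.preimage f.continuous, hf⟩⟩

theorem isOpen_tcoZ_setOf_apply_mem (y : Y) {U : Set Z} (hU : IsOpen U) :
    IsOpen[tcoZ Y Z] {f : C(Y, Z) | f y ∈ U} := by
  have hsingleton : {f : C(Y, Z) | f y ∈ U} = {f : C(Y, Z) | f '' {y} ⊆ U} := by
    simp only [image_singleton, singleton_subset_iff]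
  rw [hsingleton]
  exact isOpen_generateFrom_of_mem ⟨{y}, U, @isCompact_singleton Y (zTop Y Z) y, hU, rfl⟩

theorem isOpen_t1Z_setOf_apply_mem (y : Y) {U : Set Z} (hU : IsOpen U) :
    IsOpen[t1Z Y Z] {f : C(Y, Z) | f y ∈ U} := by
  rw [← setOf_preimage_mem_openNhdsFamily hU]
  exact isOpen_generateFrom_of_mem ⟨_, U, tau1_openNhdsFamily y, hU, rfl⟩

theorem isOpen_t1sZ_setOf_apply_mem (y : Y) {U : Set Z} (hU : IsOpen U) :
    IsOpen[t1sZ Y Z] {f : C(Y, Z) | f y ∈ U} := by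
  rw [← setOf_preimage_mem_openNhdsFamily hU]
  exact isOpen_generateFrom_of_mem ⟨_, U, tau1s_openNhdsFamily y, hU, rfl⟩

end

theorem stmt9 (Y Z : Type*) [TopologicalSpace Y] [TopologicalSpace Z] [T0Space Z] :
    @T0Space (ContinuousMap Y Z) (tcoZ Y Z) ∧
    @T0Space (ContinuousMap Y Z) (t1Z Y Z) ∧
    @T0Space (ContinuousMap Y Z) (t1sZ Y Z) :=
  ⟨t0Space_of_isOpen_setOf_apply_mem _ fun y _ => isOpen_tcoZ_setOf_apply_mem y,
    t0Space_of_isOpen_setOf_apply_mem _ fun y _ => isOpen_t1Z_setOf_apply_mem y,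
    t0Space_of_isOpen_setOf_apply_mem _ fun y _ => isOpen_t1sZ_setOf_apply_mem y⟩
end

section
/- Let Y and Z be topological spaces and suppose Z is a T1 space. Then C(Y,Z) equipped with any of the topologies t_co^Z, t_1^Z, or t_{1,s}^Z is a T1 space. -/
open Set TopologicalSpace

theorem stmt10 (Y Z : Type*) [TopologicalSpace Y] [TopologicalSpace Z] [T1Space Z] :
    @T1Space (ContinuousMap Y Z) (tcoZ Y Z) ∧
    @T1Space (ContinuousMap Y Z) (t1Z Y Z) ∧
    @T1Space (ContinuousMap Y Z) (t1sZ Y Z) := by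
  have key : ∀ (f g : ContinuousMap Y Z), f ≠ g →
      ∃ y : Y, ∃ U : Set Z, IsOpen U ∧ f y ∈ U ∧ g y ∉ U := by
    intro f g hfg
    obtain ⟨y, hy⟩ := DFunLike.ne_iff.mp hfg
    exact ⟨y, {g y}ᶜ, isOpen_compl_singleton, hy, fun h => h rfl⟩
  refine ⟨?_, ?_, ?_⟩
  · rw [@t1Space_iff_exists_open _ (tcoZ Y Z)]
    intro f g hfg
    obtain ⟨y, U, hU, hfU, hgU⟩ := key f g hfg
    refine ⟨{h : ContinuousMap Y Z | h '' {y} ⊆ U}, ?_, ?_, ?_⟩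
    · exact TopologicalSpace.GenerateOpen.basic _
        ⟨{y}, U, @isCompact_singleton Y (zTop Y Z) y, hU, rfl⟩
    · simpa using hfU
    · simpa using hgU
  · rw [@t1Space_iff_exists_open _ (t1Z Y Z)]
    intro f g hfg
    obtain ⟨y, U, hU, hfU, hgU⟩ := key f g hfg
    refine ⟨{h : ContinuousMap Y Z | h ⁻¹' U ∈ {V : Set Y | IsOpen V ∧ y ∈ V}}, ?_, ?_, ?_⟩
    · refine TopologicalSpace.GenerateOpen.basic _
        ⟨{V : Set Y | IsOpen V ∧ y ∈ V}, U, ⟨fun s hs => hs.1,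
          fun s hs _ V hV hsV => ⟨hV, hsV hs.2⟩, ?_⟩, hU, rfl⟩
      intro C hC hUn
      obtain ⟨c, hcC, hyc⟩ := hUn.2
      obtain ⟨fc, Uc, hUc, rfl⟩ := hC hcC
      exact ⟨{fc ⁻¹' Uc}, by simpa using hcC, Set.finite_singleton _,
        by simpa using ⟨hUc.preimage fc.continuous, hyc⟩⟩
    · exact ⟨hU.preimage f.continuous, hfU⟩
    · exact fun h => hgU h.2
  · rw [@t1Space_iff_exists_open _ (t1sZ Y Z)]
    intro f g hfg
    obtain ⟨y, U, hU, hfU, hgU⟩ := key f g hfg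
    refine ⟨{h : ContinuousMap Y Z | h ⁻¹' U ∈ {V : Set Y | IsOpen V ∧ y ∈ V}}, ?_, ?_, ?_⟩
    · refine TopologicalSpace.GenerateOpen.basic _
        ⟨{V : Set Y | IsOpen V ∧ y ∈ V}, U, ⟨fun s hs => hs.1,
          fun s hs _ V hV hsV => ⟨hV, hsV hs.2⟩, ?_⟩, hU, rfl⟩
      intro C hC hUn
      have hyU : y ∈ ⋃₀ C := hUn ▸ Set.mem_univ y
      obtain ⟨c, hcC, hyc⟩ := hyU
      obtain ⟨fc, Uc, hUc, rfl⟩ := hC hcC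
      exact ⟨{fc ⁻¹' Uc}, by simpa using hcC, Set.finite_singleton _,
        by simpa using ⟨hUc.preimage fc.continuous, hyc⟩⟩
    · exact ⟨hU.preimage f.continuous, hfU⟩
    · exact fun h => hgU h.2
end

section
/- Let Y and Z be topological spaces and suppose Z is a Hausdorff (T2) space. Then C(Y,Z) equipped with any of the topologies t_co^Z, t_1^Z, or t_{1,s}^Z is a Hausdorff space. -/
open Set TopologicalSpace

lemma OZ_open {Y Z : Type*} [TopologicalSpace Y] [TopologicalSpace Z]
    {s : Set Y} (hs : s ∈ OZ Y Z) : IsOpen s := by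
  obtain ⟨f, U, hU, rfl⟩ := hs
  exact hU.preimage f.continuous

lemma key_t2 {Y Z : Type*} [TopologicalSpace Y] [TopologicalSpace Z] [T2Space Z]
    (t : TopologicalSpace (ContinuousMap Y Z))
    (h : ∀ (y : Y) (U : Set Z), IsOpen U → @IsOpen _ t {f : ContinuousMap Y Z | f y ∈ U}) :
    @T2Space (ContinuousMap Y Z) t := by
  refine @T2Space.mk _ t ?_
  intro f g hfg
  obtain ⟨y, hy⟩ : ∃ y, f y ≠ g y := by
    by_contra hc; push_neg at hc; exact hfg (ContinuousMap.ext hc)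
  obtain ⟨U, V, hU, hV, hfU, hgV, hUV⟩ := t2_separation hy
  refine ⟨_, _, h y U hU, h y V hV, hfU, hgV, ?_⟩
  rw [Set.disjoint_left]
  intro a ha hb
  exact (Set.disjoint_left.mp hUV) ha hb

lemma tau1_nbhd {Y Z : Type*} [TopologicalSpace Y] [TopologicalSpace Z] (y : Y) :
    Tau1 Y Z {W : Set Y | IsOpen W ∧ y ∈ W} := by
  refine ⟨fun s hs => hs.1, fun s hs _ V hV hsub => ⟨hV, hsub hs.2⟩, ?_⟩
  intro C hC hU
  obtain ⟨s, hsC, hys⟩ := hU.2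
  exact ⟨{s}, by simpa using hsC, Set.finite_singleton s,
    by simpa using ⟨OZ_open (hC hsC), hys⟩⟩

lemma tau1s_nbhd {Y Z : Type*} [TopologicalSpace Y] [TopologicalSpace Z] (y : Y) :
    Tau1s Y Z {W : Set Y | IsOpen W ∧ y ∈ W} := by
  refine ⟨fun s hs => hs.1, fun s hs _ V hV hsub => ⟨hV, hsub hs.2⟩, ?_⟩
  intro C hC hU
  have : y ∈ ⋃₀ C := hU ▸ Set.mem_univ y
  obtain ⟨s, hsC, hys⟩ := this
  exact ⟨{s}, by simpa using hsC, Set.finite_singleton s,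
    by simpa using ⟨OZ_open (hC hsC), hys⟩⟩

theorem stmt11 (Y Z : Type*) [TopologicalSpace Y] [TopologicalSpace Z] [T2Space Z] :
    @T2Space (ContinuousMap Y Z) (tcoZ Y Z) ∧
    @T2Space (ContinuousMap Y Z) (t1Z Y Z) ∧
    @T2Space (ContinuousMap Y Z) (t1sZ Y Z) := by
  refine ⟨key_t2 _ ?_, key_t2 _ ?_, key_t2 _ ?_⟩
  · intro y U hU
    apply TopologicalSpace.GenerateOpen.basic
    refine ⟨{y}, U, @isCompact_singleton Y (zTop Y Z) y, hU, ?_⟩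
    ext f
    simp [Set.image_singleton]
  · intro y U hU
    apply TopologicalSpace.GenerateOpen.basic
    refine ⟨{W : Set Y | IsOpen W ∧ y ∈ W}, U, tau1_nbhd y, hU, ?_⟩
    ext f
    simp [hU.preimage f.continuous]
  · intro y U hU
    apply TopologicalSpace.GenerateOpen.basic
    refine ⟨{W : Set Y | IsOpen W ∧ y ∈ W}, U, tau1s_nbhd y, hU, ?_⟩
    ext f
    simp [hU.preimage f.continuous]
end

section
/- Let Y and Z be topological spaces and suppose Y is corecompact. Then the topologies t_1^Z and t_{1,s}^Z on C(Y,Z) are admissible. -/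
open Set TopologicalSpace

/-- `PrecY V W`: every open cover of `W` has a finite subfamily covering `V`. -/
def PrecY (Y : Type*) [TopologicalSpace Y] (V W : Set Y) : Prop :=
  ∀ C : Set (Set Y), (∀ c ∈ C, IsOpen c) → W ⊆ ⋃₀ C →
    ∃ F ⊆ C, F.Finite ∧ V ⊆ ⋃₀ F

lemma precY_mono {Y : Type*} [TopologicalSpace Y] {V W W' : Set Y}
    (h : PrecY Y V W) (hWW' : W ⊆ W') : PrecY Y V W' := by
  intro C hC hcov
  exact h C hC (hWW'.trans hcov)

lemma precY_subset {Y : Type*} [TopologicalSpace Y] {V W : Set Y}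
    (hW : IsOpen W) (h : PrecY Y V W) : V ⊆ W := by
  obtain ⟨F, hFsub, -, hVF⟩ := h {W} (by simpa using hW) (by simp)
  refine hVF.trans (sUnion_subset fun s hs => ?_)
  have := hFsub hs
  simp only [mem_singleton_iff] at this
  subst this
  rfl

lemma boundedIn_to_precY {Y : Type*} [inst : TopologicalSpace Y] {V W : Set Y}
    (hVW : V ⊆ W)
    (hb : BoundedIn (TopologicalSpace.induced (Subtype.val : W → Y) inst)
      ((Subtype.val : W → Y) ⁻¹' V)) : PrecY Y V W := by
  intro C hC hcov
  have hC' : ∀ c ∈ (fun c : Set Y => (Subtype.val : W → Y) ⁻¹' c) '' C,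
      @IsOpen W (TopologicalSpace.induced (Subtype.val : W → Y) inst) c := by
    rintro c ⟨c0, hc0, rfl⟩
    exact ⟨c0, hC c0 hc0, rfl⟩
  have hcover : ⋃₀ ((fun c : Set Y => (Subtype.val : W → Y) ⁻¹' c) '' C) = Set.univ := by
    ext x
    simp only [mem_sUnion, mem_image, mem_univ, iff_true]
    obtain ⟨c, hc, hxc⟩ := hcov x.2
    exact ⟨_, ⟨c, hc, rfl⟩, hxc⟩
  obtain ⟨F', hF'sub, hF'fin, hVF'⟩ := hb _ hC' hcover
  obtain ⟨F, hFsub, hFfin, hFeq⟩ :=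
    Set.exists_subset_image_finite_and.mp ⟨F', hF'sub, hF'fin, le_refl F'⟩
  refine ⟨F, hFsub, hFfin, fun x hx => ?_⟩
  have hxW : x ∈ W := hVW hx
  have hmem : (⟨x, hxW⟩ : W) ∈ ⋃₀ ((fun c : Set Y => (Subtype.val : W → Y) ⁻¹' c) '' F) :=
    sUnion_mono hFeq (hVF' hx)
  obtain ⟨s, ⟨c, hcF, rfl⟩, hxs⟩ := hmem
  exact ⟨c, hcF, hxs⟩

lemma corecompact_precY {Y : Type*} [TopologicalSpace Y] (hY : Corecompact Y)
    {y : Y} {U : Set Y} (hU : IsOpen U) (hyU : y ∈ U) :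
    ∃ V : Set Y, IsOpen V ∧ y ∈ V ∧ V ⊆ U ∧ PrecY Y V U := by
  obtain ⟨V, hV, hyV, hVU, hb⟩ := hY y U hU hyU
  exact ⟨V, hV, hyV, hVU, boundedIn_to_precY hVU hb⟩

/-- The Scott property of `{W | PrecY Y V W}` in a corecompact space. -/
lemma precY_scott {Y : Type*} [TopologicalSpace Y] (hY : Corecompact Y)
    {V W : Set Y} (C : Set (Set Y)) (hC : ∀ c ∈ C, IsOpen c)
    (hWC : W ⊆ ⋃₀ C) (h : PrecY Y V W) :
    ∃ F ⊆ C, F.Finite ∧ PrecY Y V (⋃₀ F) := by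
  classical
  have hpt : ∀ x ∈ ⋃₀ C, ∃ c, c ∈ C ∧ ∃ w, IsOpen w ∧ x ∈ w ∧ w ⊆ c ∧ PrecY Y w c := by
    intro x hx
    obtain ⟨c, hc, hxc⟩ := hx
    obtain ⟨w, hw, hxw, hwc, hprec⟩ := corecompact_precY hY (hC c hc) hxc
    exact ⟨c, hc, w, hw, hxw, hwc, hprec⟩
  choose! c hc w hw hxw hwc hprec using hpt
  obtain ⟨G', hG'sub, hG'fin, hVG'⟩ :=
    h ((fun x => w x) '' (⋃₀ C))
      (by rintro s ⟨x, hx, rfl⟩; exact hw x hx)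
      (fun x hx => ⟨w x, ⟨x, hWC hx, rfl⟩, hxw x (hWC hx)⟩)
  obtain ⟨T, hTsub, hTfin, hTeq⟩ :=
    Set.exists_subset_image_finite_and.mp ⟨G', hG'sub, hG'fin, le_refl G'⟩
  refine ⟨c '' T, ?_, hTfin.image _, ?_⟩
  · rintro s ⟨x, hx, rfl⟩; exact hc x (hTsub hx)
  · intro O hO hcov
    have hsub : ∀ t ∈ T, ∃ Ot ⊆ O, Ot.Finite ∧ w t ⊆ ⋃₀ Ot := by
      intro t ht
      refine hprec t (hTsub ht) O hO ?_
      exact (subset_sUnion_of_mem (mem_image_of_mem c ht)).trans hcov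
    choose! Ot hOtsub hOtfin hOtcov using hsub
    refine ⟨⋃ t ∈ T, Ot t, ?_, hTfin.biUnion fun t ht => hOtfin t ht, ?_⟩
    · intro s hs
      simp only [mem_iUnion] at hs
      obtain ⟨t, ht, hst⟩ := hs
      exact hOtsub t ht hst
    · intro x hx
      have hmem : x ∈ ⋃₀ ((fun x => w x) '' T) := sUnion_mono hTeq (hVG' hx)
      obtain ⟨s, ⟨t, ht, rfl⟩, hxs⟩ := hmem
      obtain ⟨o, ho, hxo⟩ := hOtcov t ht hxs
      exact ⟨o, by simp only [mem_iUnion]; exact ⟨t, ht, ho⟩, hxo⟩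

lemma tau1_precY {Y Z : Type*} [TopologicalSpace Y] [TopologicalSpace Z]
    (hY : Corecompact Y) (V : Set Y) :
    Tau1 Y Z {W | IsOpen W ∧ PrecY Y V W} := by
  refine ⟨fun s hs => hs.1, fun s hs _ V' hV' hsV' => ⟨hV', precY_mono hs.2 hsV'⟩,
    fun C hCOZ hUC => ?_⟩
  have hC : ∀ c ∈ C, IsOpen c := by
    intro c hcC
    obtain ⟨f, U, hU, rfl⟩ := hCOZ hcC
    exact hU.preimage f.continuous
  obtain ⟨F, hFsub, hFfin, hprec⟩ :=
    precY_scott hY C hC (le_refl _) hUC.2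
  exact ⟨F, hFsub, hFfin, isOpen_sUnion fun s hs => hC s (hFsub hs), hprec⟩

lemma tau1s_precY {Y Z : Type*} [TopologicalSpace Y] [TopologicalSpace Z]
    (hY : Corecompact Y) (V : Set Y) (hVuniv : PrecY Y V Set.univ) :
    Tau1s Y Z {W | IsOpen W ∧ PrecY Y V W} := by
  refine ⟨fun s hs => hs.1, fun s hs _ V' hV' hsV' => ⟨hV', precY_mono hs.2 hsV'⟩,
    fun C hCOZ hUC => ?_⟩
  have hC : ∀ c ∈ C, IsOpen c := by
    intro c hcC
    obtain ⟨f, U, hU, rfl⟩ := hCOZ hcC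
    exact hU.preimage f.continuous
  obtain ⟨F, hFsub, hFfin, hprec⟩ :=
    precY_scott hY C hC (hUC ▸ le_refl _) hVuniv
  exact ⟨F, hFsub, hFfin, isOpen_sUnion fun s hs => hC s (hFsub hs), hprec⟩

lemma admissible_of_precY_open {Y Z : Type*} [TopologicalSpace Y] [TopologicalSpace Z]
    (hY : Corecompact Y) (t : TopologicalSpace (ContinuousMap Y Z))
    (ht : ∀ (V : Set Y) (U : Set Z), IsOpen V → IsOpen U →
      @IsOpen _ t {f : ContinuousMap Y Z | f ⁻¹' U ∈ {W | IsOpen W ∧ PrecY Y V W}}) :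
    Admissible Y Z t := by
  letI : TopologicalSpace (ContinuousMap Y Z) := t
  rw [Admissible, continuous_def]
  intro U hU
  rw [isOpen_iff_forall_mem_open]
  rintro ⟨f, y⟩ hfy
  have hyf : y ∈ f ⁻¹' U := hfy
  obtain ⟨V, hV, hyV, hVf, hprec⟩ :=
    corecompact_precY hY (hU.preimage f.continuous) hyf
  refine ⟨{g : ContinuousMap Y Z | g ⁻¹' U ∈ {W | IsOpen W ∧ PrecY Y V W}} ×ˢ V,
    ?_, (ht V U hV hU).prod hV, ⟨⟨hU.preimage f.continuous, hprec⟩, hyV⟩⟩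
  rintro ⟨g, z⟩ ⟨hg, hz⟩
  exact precY_subset hg.1 hg.2 hz

theorem stmt13 (Y Z : Type*) [TopologicalSpace Y] [TopologicalSpace Z]
    (hY : Corecompact Y) :
    Admissible Y Z (t1Z Y Z) ∧ Admissible Y Z (t1sZ Y Z) := by
  constructor
  · refine admissible_of_precY_open hY _ fun V U hV hU => ?_
    exact TopologicalSpace.GenerateOpen.basic _
      ⟨{W | IsOpen W ∧ PrecY Y V W}, U, tau1_precY hY V, hU, rfl⟩
  · refine admissible_of_precY_open hY _ fun V U hV hU => ?_
    by_cases hVuniv : PrecY Y V Set.univ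
    · exact TopologicalSpace.GenerateOpen.basic _
        ⟨{W | IsOpen W ∧ PrecY Y V W}, U, tau1s_precY hY V hVuniv, hU, rfl⟩
    · convert @isOpen_empty _ (t1sZ Y Z)
      ext g
      simp only [mem_setOf_eq, mem_empty_iff_false, iff_false]
      rintro ⟨-, hprec⟩
      exact hVuniv (precY_mono hprec (subset_univ _))
end

section
/- Let Y and Z be topological spaces and suppose Y is locally bounded. Then the topology t_{1,s}^Z on C(Y,Z) is admissible. -/
open Set TopologicalSpace

theorem stmt14 (Y Z : Type*) [TopologicalSpace Y] [TopologicalSpace Z]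
    (hY : LocallyBounded Y) :
    Admissible Y Z (t1sZ Y Z) := by
  letI : TopologicalSpace (ContinuousMap Y Z) := t1sZ Y Z
  show Continuous fun p : ContinuousMap Y Z × Y => p.1 p.2
  rw [continuous_def]
  intro U hU
  rw [isOpen_prod_iff]
  intro g y hgy
  have hopen : IsOpen (g ⁻¹' U) := hU.preimage g.continuous
  obtain ⟨V, hVopen, hyV, hVsub, hVbd⟩ := hY y (g ⁻¹' U) hopen hgy
  have hOZopen : ∀ s ∈ OZ Y Z, IsOpen s := by
    rintro s ⟨f, W, hW, rfl⟩
    exact hW.preimage f.continuous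
  have hTau : Tau1s Y Z {W : Set Y | IsOpen W ∧ V ⊆ W} := by
    refine ⟨fun s hs => hs.1, fun s hs _ V' hV' hsub => ⟨hV', hs.2.trans hsub⟩, ?_⟩
    intro C hC hcov
    obtain ⟨F, hFC, hFfin, hVF⟩ := hVbd C (fun c hc => hOZopen c (hC hc)) hcov
    exact ⟨F, hFC, hFfin, isOpen_sUnion fun c hc => hOZopen c (hC (hFC hc)), hVF⟩
  refine ⟨{h : ContinuousMap Y Z | h ⁻¹' U ∈ {W : Set Y | IsOpen W ∧ V ⊆ W}}, V,
    ?_, hVopen, ⟨hopen, hVsub⟩, hyV, ?_⟩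
  · exact TopologicalSpace.GenerateOpen.basic _
      ⟨{W : Set Y | IsOpen W ∧ V ⊆ W}, U, hTau, hU, rfl⟩
  · rintro ⟨h, y'⟩ ⟨hh, hy'⟩
    exact hh.2 hy'
end

section
/- Let Z be a topological space and let Y be a locally Z-bounded space. Then the topology t_{1,s}^Z on C(Y,Z) is admissible, i.e. the evaluation map e : C_{t_{1,s}^Z}(Y,Z) × Y → Z, e(f,y) = f(y), is continuous. -/
open Set TopologicalSpace

theorem stmt17 (Y Z : Type*) [TopologicalSpace Y] [TopologicalSpace Z]
    (hY : LocallyZBounded Y Z) :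
    Admissible Y Z (t1sZ Y Z) := by
  letI : TopologicalSpace (ContinuousMap Y Z) := t1sZ Y Z
  have hOZopen : ∀ s ∈ OZ Y Z, IsOpen s := by
    rintro s ⟨g, V, hV, rfl⟩
    exact hV.preimage g.continuous
  rw [Admissible, continuous_def]
  intro U hU
  rw [isOpen_prod_iff]
  intro f y hfy
  obtain ⟨s, hsOZ, hys, hsU, hsb⟩ := hY y (f ⁻¹' U) (hU.preimage f.continuous) hfy
  set H : Set (Set Y) := {V | IsOpen V ∧ s ⊆ V} with hH
  have hTau : Tau1s Y Z H := by
    refine ⟨fun V hV => hV.1, fun V hV _ W hW hVW => ⟨hW, hV.2.trans hVW⟩, ?_⟩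
    intro C hC hcov
    obtain ⟨F, hFC, hFfin, hsF⟩ := hsb C
      (fun c hc => TopologicalSpace.GenerateOpen.basic c (hC hc)) hcov
    exact ⟨F, hFC, hFfin, isOpen_sUnion fun c hc => hOZopen c (hC (hFC hc)), hsF⟩
  refine ⟨{g : ContinuousMap Y Z | g ⁻¹' U ∈ H}, s,
    TopologicalSpace.GenerateOpen.basic _ ⟨H, U, hTau, hU, rfl⟩,
    hOZopen s hsOZ, ⟨hU.preimage f.continuous, hsU⟩, hys, ?_⟩
  rintro ⟨g, y'⟩ ⟨hg, hy'⟩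
  exact hg.2 hy'
end

section
/- Let Z be a topological space and let Y be a Z-corecompact space. Then the topology t_{1,s}^Z on C(Y,Z) is admissible, i.e. the evaluation map e : C_{t_{1,s}^Z}(Y,Z) × Y → Z, e(f,y) = f(y), is continuous. -/
open Set TopologicalSpace

theorem stmt19 (Y Z : Type*) [TopologicalSpace Y] [TopologicalSpace Z]
    (hY : ZCorecompact Y Z) :
    Admissible Y Z (t1sZ Y Z) := by
  letI t : TopologicalSpace (ContinuousMap Y Z) := t1sZ Y Z
  show Continuous fun p : ContinuousMap Y Z × Y => p.1 p.2
  rw [continuous_def]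
  intro W hW
  rw [isOpen_prod_iff]
  rintro f y hfy
  have hU : IsOpen (f ⁻¹' W) := f.continuous.isOpen_preimage W hW
  obtain ⟨s, hsOZ, hys, hsU, hwb⟩ := hY y (f ⁻¹' W) hU hfy
  have hsopen : IsOpen s := by
    obtain ⟨g, V, hV, rfl⟩ := hsOZ
    exact g.continuous.isOpen_preimage V hV
  set H : Set (Set Y) := {V | IsOpen V ∧ s ⊆ V} with hHdef
  have hTau : Tau1s Y Z H := by
    refine ⟨fun v hv => hv.1, fun v hv _ V hVo hvV => ⟨hVo, hv.2.trans hvV⟩, ?_⟩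
    intro C hC hCU
    have hCopenY : ∀ c ∈ C, IsOpen c := by
      intro c hc
      obtain ⟨g, V, hV, rfl⟩ := hC hc
      exact g.continuous.isOpen_preimage V hV
    obtain ⟨F', hF'sub, hF'fin, hcov⟩ :=
      hwb ((fun c : Set Y => (Subtype.val : (f ⁻¹' W) → Y) ⁻¹' c) '' C)
        (by
          rintro c' ⟨c, hc, rfl⟩
          have hcz : @IsOpen Y (zTop Y Z) c :=
            TopologicalSpace.GenerateOpen.basic c (hC hc)
          exact ⟨c, hcz, rfl⟩)
        (by
          rw [Set.sUnion_image]
          ext x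
          simp only [Set.mem_iUnion, Set.mem_univ, iff_true]
          have : (x : Y) ∈ ⋃₀ C := hCU ▸ Set.mem_univ _
          obtain ⟨c, hc, hxc⟩ := this
          exact ⟨c, hc, hxc⟩)
    obtain ⟨F, hFC, hFfin, hcov'⟩ :=
      (Set.exists_subset_image_finite_and
        (f := fun c : Set Y => (Subtype.val : (f ⁻¹' W) → Y) ⁻¹' c) (s := C)
        (p := fun t => (Subtype.val : (f ⁻¹' W) → Y) ⁻¹' s ⊆ ⋃₀ t)).mp
        ⟨F', hF'sub, hF'fin, hcov⟩
    refine ⟨F, hFC, hFfin, ?_, ?_⟩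
    · exact isOpen_sUnion fun c hc => hCopenY c (hFC hc)
    · intro x hx
      have hxU : x ∈ f ⁻¹' W := hsU hx
      have : (⟨x, hxU⟩ : (f ⁻¹' W)) ∈ ⋃₀ ((fun c : Set Y => (Subtype.val : (f ⁻¹' W) → Y) ⁻¹' c) '' F) := hcov' hx
      rw [Set.sUnion_image] at this
      simp only [Set.mem_iUnion, Set.mem_preimage] at this
      obtain ⟨c, hc, hxc⟩ := this
      exact ⟨c, hc, hxc⟩
  refine ⟨{g : ContinuousMap Y Z | g ⁻¹' W ∈ H}, s,
    TopologicalSpace.isOpen_generateFrom_of_mem ⟨H, W, hTau, hW, rfl⟩,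
    hsopen, ⟨hU, hsU⟩, hys, ?_⟩
  rintro ⟨g, x⟩ ⟨hg, hx⟩
  exact hg.2 hx
end
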